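/- Let Q be a nonnegative n×n real matrix. Then Q is transient if and only if there exists a vector y ≫ 0 in ℝ^n such that y ≫ Qy. -/
import Mathlib


open Matrix Filter Finset

/-- A square real matrix is *transient* if every entry of `Q ^ t` tends to `0` as `t → ∞`. -/
def Matrix.Transient {n : ℕ} (Q : Matrix (Fin n) (Fin n) ℝ) : Prop :=
  ∀ i j, Tendsto (fun t : ℕ => (Q ^ t) i j) atTop (nhds 0)

private lemma pow_entry_nonneg {n : ℕ} {Q : Matrix (Fin n) (Fin n) ℝ}
    (hQ : ∀ i j, 0 ≤ Q i j) : ∀ t i j, 0 ≤ (Q ^ t) i j := by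
  intro t
  induction t with
  | zero =>
    intro i j
    by_cases h : i = j <;> simp [Matrix.one_apply, h]
  | succ t ih =>
    intro i j
    rw [pow_succ, Matrix.mul_apply]
    exact Finset.sum_nonneg fun k _ => mul_nonneg (ih i k) (hQ k j)

/-- a nonnegative square matrix `Q` is transient iff there is a vector `y ≫ 0`
with `y ≫ Q y`. -/
theorem transient_iff_exists_pos_vector {n : ℕ} (Q : Matrix (Fin n) (Fin n) ℝ)
    (hQ : ∀ i j, 0 ≤ Q i j) :
    Q.Transient ↔
      ∃ y : Fin n → ℝ, (∀ j, 0 < y j) ∧ ∀ j, (Q *ᵥ y) j < y j := by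
  constructor
  · intro hT
    rcases Nat.eq_zero_or_pos n with hn | hn
    · subst hn
      exact ⟨fun _ => 1, fun j => j.elim0, fun j => j.elim0⟩
    -- row sums tend to 0
    have hrow : ∀ i, Tendsto (fun t : ℕ => ∑ j, (Q ^ t) i j) atTop (nhds 0) := by
      intro i
      have := tendsto_finset_sum (Finset.univ : Finset (Fin n)) (fun j _ => hT i j)
      simpa using this
    have hev : ∀ᶠ t : ℕ in atTop, ∀ i, ∑ j, (Q ^ t) i j < 1 :=
      eventually_all.2 fun i => (hrow i).eventually_lt_const zero_lt_one
    obtain ⟨T, hT1, hTlt⟩ := ((eventually_ge_atTop 1).and hev).exists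
    set f : ℕ → Fin n → ℝ := fun s => (Q ^ s) *ᵥ (fun _ => (1 : ℝ)) with hf
    have hfnonneg : ∀ s j, 0 ≤ f s j := by
      intro s j
      simp only [hf, Matrix.mulVec, dotProduct]
      exact Finset.sum_nonneg fun k _ =>
        mul_nonneg (pow_entry_nonneg hQ s j k) zero_le_one
    have hf0 : ∀ j, f 0 j = 1 := by
      intro j; simp [hf]
    refine ⟨fun j => ∑ s ∈ Finset.range T, f s j, ?_, ?_⟩
    · intro j
      have h1 : f 0 j ≤ ∑ s ∈ Finset.range T, f s j :=
        Finset.single_le_sum (fun s _ => hfnonneg s j)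
          (Finset.mem_range.2 hT1)
      rw [hf0 j] at h1
      linarith
    · intro j
      have hswap : (Q *ᵥ fun k => ∑ s ∈ Finset.range T, f s k) j
          = ∑ s ∈ Finset.range T, (Q *ᵥ f s) j := by
        simp only [mulVec, dotProduct, Finset.mul_sum]
        rw [Finset.sum_comm]
      have hstep : ∀ s, Q *ᵥ f s = f (s + 1) := by
        intro s
        simp only [hf, Matrix.mulVec_mulVec, ← pow_succ']
      have hfT : f T j < 1 := by
        have := hTlt j
        simpa [hf, mulVec, dotProduct] using this
      rw [hswap]
      simp only [hstep]
      have hsum : ∑ s ∈ Finset.range (T + 1), f s j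
          = (∑ s ∈ Finset.range T, f (s + 1) j) + f 0 j :=
        Finset.sum_range_succ' (fun s => f s j) T
      have hsum2 : ∑ s ∈ Finset.range (T + 1), f s j
          = (∑ s ∈ Finset.range T, f s j) + f T j :=
        Finset.sum_range_succ (fun s => f s j) T
      rw [hf0 j] at hsum
      linarith
  · rintro ⟨y, hy, hQy⟩ i j
    haveI : Nonempty (Fin n) := ⟨i⟩
    set c := Finset.univ.sup' Finset.univ_nonempty (fun k => (Q *ᵥ y) k / y k) with hc
    have hQyk : ∀ k, 0 ≤ (Q *ᵥ y) k := by
      intro k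
      simp only [Matrix.mulVec, dotProduct]
      exact Finset.sum_nonneg fun m _ => mul_nonneg (hQ k m) (hy m).le
    have hc0 : 0 ≤ c :=
      le_trans (div_nonneg (hQyk i) (hy i).le)
        (Finset.le_sup' (fun k => (Q *ᵥ y) k / y k) (Finset.mem_univ i))
    have hc1 : c < 1 :=
      (Finset.sup'_lt_iff _).2 fun k _ => (div_lt_one (hy k)).2 (hQy k)
    have hle : ∀ k, (Q *ᵥ y) k ≤ c * y k := by
      intro k
      have := Finset.le_sup' (fun k => (Q *ᵥ y) k / y k) (Finset.mem_univ k)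
      calc (Q *ᵥ y) k = ((Q *ᵥ y) k / y k) * y k := by
            rw [div_mul_cancel₀ _ (hy k).ne']
        _ ≤ c * y k := mul_le_mul_of_nonneg_right this (hy k).le
    have key : ∀ t k, ((Q ^ t) *ᵥ y) k ≤ c ^ t * y k := by
      intro t
      induction t with
      | zero => intro k; simp
      | succ t ih =>
        intro k
        have h1 : (Q ^ (t + 1)) *ᵥ y = (Q ^ t) *ᵥ (Q *ᵥ y) := by
          rw [Matrix.mulVec_mulVec, ← pow_succ]
        rw [h1]
        have h2 : ((Q ^ t) *ᵥ (Q *ᵥ y)) k ≤ ((Q ^ t) *ᵥ fun m => c * y m) k := by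
          simp only [Matrix.mulVec, dotProduct]
          exact Finset.sum_le_sum fun m _ =>
            mul_le_mul_of_nonneg_left (hle m) (pow_entry_nonneg hQ t k m)
        have h3 : ((Q ^ t) *ᵥ fun m => c * y m) k = c * ((Q ^ t) *ᵥ y) k := by
          simp only [mulVec, dotProduct, Finset.mul_sum]
          congr 1; ext m; ring
        calc ((Q ^ t) *ᵥ (Q *ᵥ y)) k ≤ c * ((Q ^ t) *ᵥ y) k := by rw [← h3]; exact h2
          _ ≤ c * (c ^ t * y k) := mul_le_mul_of_nonneg_left (ih k) hc0
          _ = c ^ (t + 1) * y k := by ring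
    have hbound : ∀ t : ℕ, (Q ^ t) i j ≤ c ^ t * (y i / y j) := by
      intro t
      have h1 : (Q ^ t) i j * y j ≤ ((Q ^ t) *ᵥ y) i := by
        simp only [Matrix.mulVec, dotProduct]
        exact Finset.single_le_sum
          (fun m _ => mul_nonneg (pow_entry_nonneg hQ t i m) (hy m).le)
          (Finset.mem_univ j)
      have h2 := le_trans h1 (key t i)
      rw [← mul_div_assoc]
      exact (le_div_iff₀ (hy j)).2 h2
    have hg : Tendsto (fun t : ℕ => c ^ t * (y i / y j)) atTop (nhds 0) := by
      have := (tendsto_pow_atTop_nhds_zero_of_lt_one hc0 hc1).mul_const (y i / y j)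
      simpa using this
    exact squeeze_zero (fun t => pow_entry_nonneg hQ t i j) hbound hg
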